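/- Let m, n ≥ 2 and consider the matching sequence on Δᵗ₂(K_m □ P_n). Let σ ∈ 𝒞₁ and suppose there exist 1 ≤ i ≤ m−1 and 1 ≤ j ≤ n−1 such that {(0,1), (0,2), …, (0,j)} ⊆ σ, {(0,0), (i,j)} ⊆ σ^c, and σ ∖ {(0,j)} ∈ 𝒞₁. Then σ ∉ 𝒞_n and σ ∖ {(0,j)} ∉ 𝒞_n. -/
import Mathlib


/-- Adjacency in the Cartesian product `K_m □ P_n`, on the vertex set
`{0,…,m-1} × {0,…,n-1} ⊆ ℕ × ℕ`: distinct `(i₁,j₁)`, `(i₂,j₂)` are adjacent iff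
(`i₁ = i₂` and `|j₁ - j₂| = 1`) or (`j₁ = j₂` and `i₁ ≠ i₂`). -/
def adjKmPn (m n : ℕ) (u v : ℕ × ℕ) : Prop :=
  u.1 < m ∧ u.2 < n ∧ v.1 < m ∧ v.2 < n ∧ u ≠ v ∧
    ((u.1 = v.1 ∧ (u.2 + 1 = v.2 ∨ v.2 + 1 = u.2)) ∨ (u.2 = v.2 ∧ u.1 ≠ v.1))

/-- The total 2-cut complex `Δᵗ₂(K_m □ P_n)`: faces are the subsets
`σ ⊆ {0,…,m-1} × {0,…,n-1}` whose complement contains a disconnected 2-set,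
i.e. two distinct nonadjacent vertices. -/
def facesKmPn (m n : ℕ) : Set (Finset (ℕ × ℕ)) :=
  {σ | σ ⊆ Finset.range m ×ˢ Finset.range n ∧
    ∃ u ∈ (Finset.range m ×ˢ Finset.range n) \ σ,
      ∃ v ∈ (Finset.range m ×ˢ Finset.range n) \ σ, u ≠ v ∧ ¬ adjKmPn m n u v}

/-- The matching sequence `𝒞₀, 𝒞₁, …` on `Δᵗ₂(K_m □ P_n)`, using the vertices
`(0,0), (0,1), …`: `𝒞₀` is the set of all faces, and `𝒞_{j+1}` consists of those
`σ ∈ 𝒞_j` lying in no pair of the matching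
`M_j = { {σ∖{(0,j)}, σ∪{(0,j)}} : both σ∖{(0,j)} ∈ 𝒞_j and σ∪{(0,j)} ∈ 𝒞_j }`
(a face `σ` lies in such a pair iff both `σ∖{(0,j)} ∈ 𝒞_j` and `σ∪{(0,j)} ∈ 𝒞_j`). -/
def matchSeqKmPn (m n : ℕ) : ℕ → Set (Finset (ℕ × ℕ))
  | 0 => facesKmPn m n
  | (j + 1) => {σ ∈ matchSeqKmPn m n j |
      ¬(σ.erase (0, j) ∈ matchSeqKmPn m n j ∧ insert (0, j) σ ∈ matchSeqKmPn m n j)}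

lemma matchSeq_succ (m n k : ℕ) (σ : Finset (ℕ × ℕ)) :
    σ ∈ matchSeqKmPn m n (k + 1) ↔ σ ∈ matchSeqKmPn m n k ∧
      ¬(σ.erase (0, k) ∈ matchSeqKmPn m n k ∧ insert (0, k) σ ∈ matchSeqKmPn m n k) :=
  Iff.rfl

lemma matchSeq_anti (m n : ℕ) {a b : ℕ} (h : a ≤ b) :
    matchSeqKmPn m n b ⊆ matchSeqKmPn m n a := by
  induction b with
  | zero =>
    have ha : a = 0 := by omega
    subst ha; exact subset_rfl
  | succ k ih =>
    rcases Nat.lt_or_ge a (k + 1) with h' | h'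
    · exact fun σ hσ => ih (by omega) ((matchSeq_succ m n k σ).mp hσ).1
    · obtain rfl : a = k + 1 := by omega
      exact subset_rfl

lemma key (m n i j k : ℕ) (hi1 : 1 ≤ i) (hik : i < m) (hjn : j < n)
    (hk1 : 1 ≤ k) (hkj : k < j) (X : Finset (ℕ × ℕ))
    (hX : X ⊆ Finset.range m ×ˢ Finset.range n)
    (h00 : ((0 : ℕ), (0 : ℕ)) ∉ X) (hij : ((i : ℕ), j) ∉ X) :
    X.erase (0, k) ∉ matchSeqKmPn m n 1 := by
  intro hmem
  rw [matchSeq_succ] at hmem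
  obtain ⟨hmem0, hnot⟩ := hmem
  apply hnot
  have h00' : ((0 : ℕ), (0 : ℕ)) ∉ X.erase (0, k) := fun h => h00 (Finset.mem_of_mem_erase h)
  have hzero : ((0 : ℕ), (0 : ℕ)) ∈ Finset.range m ×ˢ Finset.range n := by
    simp [Finset.mem_product]; omega
  constructor
  · rwa [Finset.erase_eq_self.mpr h00']
  · -- insert (0,0) (X.erase (0,k)) is a face
    show _ ∈ facesKmPn m n
    refine ⟨?_, (0, k), ?_, (i, j), ?_, ?_, ?_⟩
    · intro x hx
      rcases Finset.mem_insert.mp hx with rfl | hx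
      · exact hzero
      · exact hX (Finset.mem_of_mem_erase hx)
    · simp only [Finset.mem_sdiff, Finset.mem_product, Finset.mem_range, Finset.mem_insert]
      refine ⟨⟨by omega, by omega⟩, ?_⟩
      rintro (h | h)
      · exact absurd (congrArg Prod.snd h) (by simp; omega)
      · exact Finset.notMem_erase _ _ h
    · simp only [Finset.mem_sdiff, Finset.mem_product, Finset.mem_range, Finset.mem_insert]
      refine ⟨⟨by omega, by omega⟩, ?_⟩
      rintro (h | h)
      · exact absurd (congrArg Prod.fst h) (by simp; omega)
      · exact hij (Finset.mem_of_mem_erase h)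
    · intro h; have := congrArg Prod.fst h; simp at this; omega
    · rintro ⟨-, -, -, -, -, (⟨h1, -⟩ | ⟨h2, -⟩)⟩
      · simp at h1; omega
      · simp at h2; omega

/-- Proposition 3.13(ii): let `m, n ≥ 2` and `σ ∈ 𝒞₁`.  If there are
`1 ≤ i ≤ m-1` and `1 ≤ j ≤ n-1` with `{(0,1), (0,2), …, (0,j)} ⊆ σ`,
`{(0,0), (i,j)} ⊆ σᶜ` and `σ ∖ {(0,j)} ∈ 𝒞₁`, then `σ ∉ 𝒞_n` and
`σ ∖ {(0,j)} ∉ 𝒞_n`. -/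
theorem stmt16 (m n : ℕ) (hm : 2 ≤ m) (hn : 2 ≤ n)
    (σ : Finset (ℕ × ℕ)) (hσ : σ ∈ matchSeqKmPn m n 1)
    (i j : ℕ) (hi1 : 1 ≤ i) (hi2 : i ≤ m - 1) (hj1 : 1 ≤ j) (hj2 : j ≤ n - 1)
    (hsub : ∀ r : ℕ, 1 ≤ r → r ≤ j → ((0 : ℕ), r) ∈ σ)
    (hcompl : ({((0 : ℕ), (0 : ℕ)), (i, j)} : Finset (ℕ × ℕ)) ⊆
      (Finset.range m ×ˢ Finset.range n) \ σ)
    (herase : σ.erase (0, j) ∈ matchSeqKmPn m n 1) :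
    σ ∉ matchSeqKmPn m n n ∧ σ.erase (0, j) ∉ matchSeqKmPn m n n := by
  have him : i < m := by omega
  have hjn : j < n := by omega
  have h00c : ((0 : ℕ), (0 : ℕ)) ∉ σ :=
    (Finset.mem_sdiff.mp (hcompl (by simp))).2
  have hijc : ((i : ℕ), j) ∉ σ :=
    (Finset.mem_sdiff.mp (hcompl (by simp))).2
  have hσsub : σ ⊆ Finset.range m ×ˢ Finset.range n :=
    ((matchSeq_succ m n 0 σ).mp hσ).1.1
  have hτsub : σ.erase (0, j) ⊆ Finset.range m ×ˢ Finset.range n :=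
    (Finset.erase_subset _ _).trans hσsub
  have h00τ : ((0 : ℕ), (0 : ℕ)) ∉ σ.erase (0, j) :=
    fun h => h00c (Finset.mem_of_mem_erase h)
  have hijτ : ((i : ℕ), j) ∉ σ.erase (0, j) :=
    fun h => hijc (Finset.mem_of_mem_erase h)
  -- σ and τ survive up to stage j
  have hsurv : ∀ k, 1 ≤ k → k ≤ j →
      σ ∈ matchSeqKmPn m n k ∧ σ.erase (0, j) ∈ matchSeqKmPn m n k := by
    intro k
    induction k with
    | zero => omega
    | succ k ih =>
      intro hk1 hkj
      rcases Nat.eq_or_lt_of_le hk1 with h1 | h1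
      · obtain rfl : k = 0 := by omega
        exact ⟨hσ, herase⟩
      · have hk1' : 1 ≤ k := by omega
        have hkj' : k ≤ j := by omega
        obtain ⟨hσk, hτk⟩ := ih hk1' hkj'
        have hkltj : k < j := by omega
        constructor
        · rw [matchSeq_succ]
          refine ⟨hσk, fun ⟨h1, _⟩ => ?_⟩
          exact key m n i j k hi1 him hjn hk1' hkltj σ hσsub h00c hijc
            (matchSeq_anti m n (by omega) h1)
        · rw [matchSeq_succ]
          refine ⟨hτk, fun ⟨h1, _⟩ => ?_⟩
          exact key m n i j k hi1 him hjn hk1' hkltj (σ.erase (0, j)) hτsub h00τ hijτ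
            (matchSeq_anti m n (by omega) h1)
  obtain ⟨hσj, hτj⟩ := hsurv j hj1 le_rfl
  have h0jσ : ((0 : ℕ), j) ∈ σ := hsub j hj1 le_rfl
  have hins : insert ((0 : ℕ), j) σ = σ := Finset.insert_eq_self.mpr h0jσ
  have hinsτ : insert ((0 : ℕ), j) (σ.erase (0, j)) = σ := Finset.insert_erase h0jσ
  have hσnot : σ ∉ matchSeqKmPn m n (j + 1) := by
    rw [matchSeq_succ]
    rintro ⟨-, hnot⟩
    exact hnot ⟨hτj, hins.symm ▸ hσj⟩
  have hτnot : σ.erase (0, j) ∉ matchSeqKmPn m n (j + 1) := by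
    rw [matchSeq_succ]
    rintro ⟨-, hnot⟩
    refine hnot ⟨?_, hinsτ.symm ▸ hσj⟩
    rwa [Finset.erase_idem]
  exact ⟨fun h => hσnot (matchSeq_anti m n (by omega) h),
    fun h => hτnot (matchSeq_anti m n (by omega) h)⟩
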